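/- arXiv:1001.4240 — 12 statements merged into one kernel-verified Lean document; each statement's English description precedes it below -/
import Mathlib

section
/- The commutator bracket of a Hom-associative algebra satisfies the Hom-Jacobi identity, i.e., if (V, μ, α) is a Hom-associative algebra and [x,y] := μ(x,y) - μ(y,x), then [α(x),[y,z]] + [α(y),[z,x]] + [α(z),[x,y]] = 0 for all x, y, z in V. -/
theorem stmt0 {K V : Type*} [Field K] [CharZero K] [AddCommGroup V] [Module K V]
    (μ : V →ₗ[K] V →ₗ[K] V) (α : V →ₗ[K] V)
    (hassoc : ∀ x y z : V, μ (α x) (μ y z) = μ (μ x y) (α z))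
    (br : V → V → V) (hbr : ∀ x y, br x y = μ x y - μ y x) :
    ∀ x y z : V, br (α x) (br y z) + br (α y) (br z x) + br (α z) (br x y) = 0 := by
  intro x y z
  simp only [hbr, map_sub, LinearMap.sub_apply]
  have h1 := hassoc x y z
  have h2 := hassoc x z y
  have h3 := hassoc y z x
  have h4 := hassoc y x z
  have h5 := hassoc z x y
  have h6 := hassoc z y x
  abel_nf
  rw [h1, h2, h3, h4, h5, h6]
  abel
end

section
/- The commutator bracket [x,y] := μ(x,y) - μ(y,x) of a Hom-associative algebra is skew-symmetric and together with α defines a Hom-Lie algebra structure on V. -/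
theorem stmt1 {K V : Type*} [Field K] [CharZero K] [AddCommGroup V] [Module K V]
    (μ : V →ₗ[K] V →ₗ[K] V) (α : V →ₗ[K] V)
    (hassoc : ∀ x y z : V, μ (α x) (μ y z) = μ (μ x y) (α z))
    (br : V → V → V) (hbr : ∀ x y, br x y = μ x y - μ y x) :
    (∀ x y : V, br x y = - br y x) ∧
    (∀ x y z : V, br (α x) (br y z) + br (α y) (br z x) + br (α z) (br x y) = 0) := by
  constructor
  · intro x y; rw [hbr, hbr]; abel
  · intro x y z
    simp only [hbr, map_sub, LinearMap.sub_apply, hassoc]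
    abel
end

section
/- A Hom-algebra (V, μ, α) is Hom-flexible if and only if for all x, y, z in V: μ⁻(α(x), μ⁺(y,z)) = μ⁺(μ⁻(x,y), α(z)) + μ⁺(α(y), μ⁻(x,z)), where μ⁻(x,y) = (1/2)(μ(x,y) - μ(y,x)) and μ⁺(x,y) = (1/2)(μ(x,y) + μ(y,x)). -/
theorem stmt5 {K V : Type*} [Field K] [CharZero K] [AddCommGroup V] [Module K V]
    (μ : V →ₗ[K] V →ₗ[K] V) (α : V →ₗ[K] V)
    (μm μp : V → V → V)
    (hμm : ∀ x y, μm x y = ((2:K)⁻¹) • (μ x y - μ y x))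
    (hμp : ∀ x y, μp x y = ((2:K)⁻¹) • (μ x y + μ y x)) :
    (∀ x y : V, μ (α x) (μ y x) = μ (μ x y) (α x)) ↔
    (∀ x y z : V, μm (α x) (μp y z) = μp (μm x y) (α z) + μp (α y) (μm x z)) := by
  constructor
  · intro h x y z
    have key : ∀ a b c : V, μ (α a) (μ b c) + μ (α c) (μ b a)
        = μ (μ c b) (α a) + μ (μ a b) (α c) := by
      intro a b c
      have h1 := h (a + c) b
      simp only [map_add, LinearMap.add_apply] at h1
      have h2 := h a b
      have h3 := h c b
      linear_combination (norm := module) h1 - h2 - h3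
    simp only [hμm, hμp, map_add, map_sub, map_smul, LinearMap.add_apply,
      LinearMap.sub_apply, LinearMap.smul_apply]
    linear_combination (norm := module)
      ((2:K)⁻¹ * (2:K)⁻¹) • (key x y z + key x z y - key z x y)
  · intro h x y
    have h1 := h x y x
    simp only [hμm, hμp, map_add, map_sub, map_smul, LinearMap.add_apply,
      LinearMap.sub_apply, LinearMap.smul_apply] at h1
    linear_combination (norm := module) (2:K) • h1
end

section
/- A Hom-algebra (V, μ, α) is Hom-Lie admissible (i.e., the commutator bracket [x,y] = μ(x,y) - μ(y,x) satisfies the Hom-Jacobi identity) if and only if S(x,y,z) = S(x,z,y) for all x, y, z, where S(x,y,z) := as_α(x,y,z) + as_α(y,z,x) + as_α(z,x,y). -/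
theorem stmt7 {K V : Type*} [Field K] [CharZero K] [AddCommGroup V] [Module K V]
    (μ : V →ₗ[K] V →ₗ[K] V) (α : V →ₗ[K] V)
    (as : V → V → V → V)
    (has : ∀ x y z : V, as x y z = μ (α x) (μ y z) - μ (μ x y) (α z))
    (br : V → V → V) (hbr : ∀ x y, br x y = μ x y - μ y x)
    (S : V → V → V → V) (hS : ∀ x y z, S x y z = as x y z + as y z x + as z x y) :
    (∀ x y z : V, br (α x) (br y z) + br (α y) (br z x) + br (α z) (br x y) = 0) ↔
    (∀ x y z : V, S x y z = S x z y) := by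
  have key : ∀ x y z : V,
      br (α x) (br y z) + br (α y) (br z x) + br (α z) (br x y) = S x y z - S x z y := by
    intro x y z
    simp only [hbr, hS, has, map_sub, LinearMap.sub_apply]
    abel
  constructor
  · intro h x y z
    have := h x y z
    rw [key] at this
    exact sub_eq_zero.mp this
  · intro h x y z
    rw [key, h, sub_self]
end

section
/- Every G₂-Hom-associative algebra (Hom-Vinberg algebra) is Hom-Lie admissible: if μ(α(x), μ(y,z)) - μ(α(y), μ(x,z)) = μ(μ(x,y), α(z)) - μ(μ(y,x), α(z)) for all x, y, z, then the bracket [x,y] = μ(x,y) - μ(y,x) satisfies the Hom-Jacobi identity. -/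
theorem stmt9 {K V : Type*} [Field K] [CharZero K] [AddCommGroup V] [Module K V]
    (μ : V →ₗ[K] V →ₗ[K] V) (α : V →ₗ[K] V)
    (hG2 : ∀ x y z : V, μ (α x) (μ y z) - μ (α y) (μ x z) =
      μ (μ x y) (α z) - μ (μ y x) (α z))
    (br : V → V → V) (hbr : ∀ x y, br x y = μ x y - μ y x) :
    ∀ x y z : V, br (α x) (br y z) + br (α y) (br z x) + br (α z) (br x y) = 0 := by
  intro x y z
  simp only [hbr, map_sub, LinearMap.sub_apply]
  have h1 := hG2 y z x
  have h2 := hG2 z x y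
  have h3 := hG2 x y z
  abel_nf
  abel_nf at h1 h2 h3
  linear_combination (norm := abel) h1 + h2 + h3
end

section
/- Every G₃-Hom-associative algebra (Hom-pre-Lie algebra) is Hom-Lie admissible: if μ(α(x), μ(y,z)) - μ(α(x), μ(z,y)) = μ(μ(x,y), α(z)) - μ(μ(x,z), α(y)) for all x, y, z, then the bracket [x,y] = μ(x,y) - μ(y,x) satisfies the Hom-Jacobi identity. -/
theorem stmt10 {K V : Type*} [Field K] [CharZero K] [AddCommGroup V] [Module K V]
    (μ : V →ₗ[K] V →ₗ[K] V) (α : V →ₗ[K] V)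
    (hG3 : ∀ x y z : V, μ (α x) (μ y z) - μ (α x) (μ z y) =
      μ (μ x y) (α z) - μ (μ x z) (α y))
    (br : V → V → V) (hbr : ∀ x y, br x y = μ x y - μ y x) :
    ∀ x y z : V, br (α x) (br y z) + br (α y) (br z x) + br (α z) (br x y) = 0 := by
  intro x y z
  simp only [hbr, map_sub, LinearMap.sub_apply]
  have h1 := hG3 x y z
  have h2 := hG3 y z x
  have h3 := hG3 z x y
  abel_nf
  abel_nf at h1 h2 h3
  linear_combination (norm := abel) h1 + h2 + h3
end

section
/- If (V, μ) is an associative algebra and α: V → V is an algebra endomorphism, then (V, μ_α, α) with μ_α := α ∘ μ is a Hom-associative algebra. -/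
theorem stmt11 {K V : Type*} [Field K] [CharZero K] [AddCommGroup V] [Module K V]
    (μ : V →ₗ[K] V →ₗ[K] V) (α : V →ₗ[K] V)
    (hassoc : ∀ x y z : V, μ x (μ y z) = μ (μ x y) z)
    (hend : ∀ x y : V, α (μ x y) = μ (α x) (α y))
    (ν : V → V → V) (hν : ∀ x y, ν x y = α (μ x y)) :
    ∀ x y z : V, ν (α x) (ν y z) = ν (ν x y) (α z) := by
  intro x y z
  simp only [hν, hend, hassoc]
end

section
/- If (V, [·,·]) is a Lie algebra and α: V → V is a Lie algebra endomorphism, then (V, [·,·]_α, α) with [x,y]_α := α([x,y]) is a Hom-Lie algebra. -/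
theorem stmt12 {K V : Type*} [Field K] [CharZero K] [AddCommGroup V] [Module K V]
    (br : V →ₗ[K] V →ₗ[K] V) (α : V →ₗ[K] V)
    (hskew : ∀ x y : V, br x y = - br y x)
    (hjac : ∀ x y z : V, br x (br y z) + br y (br z x) + br z (br x y) = 0)
    (hend : ∀ x y : V, α (br x y) = br (α x) (α y))
    (br' : V → V → V) (hbr' : ∀ x y, br' x y = α (br x y)) :
    (∀ x y : V, br' x y = - br' y x) ∧
    (∀ x y z : V, br' (α x) (br' y z) + br' (α y) (br' z x) + br' (α z) (br' x y) = 0) := by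
  constructor
  · intro x y
    rw [hbr', hbr', hskew, map_neg]
  · intro x y z
    simp only [hbr', hend]
    exact hjac _ _ _
end

section
/- Every Hom-alternative algebra is Hom-flexible: as_α(x,y,x) = 0 for all x, y. -/
theorem stmt16 {K V : Type*} [Field K] [CharZero K] [AddCommGroup V] [Module K V]
    (μ : V →ₗ[K] V →ₗ[K] V) (α : V →ₗ[K] V)
    (as : V → V → V → V)
    (has : ∀ x y z : V, as x y z = μ (α x) (μ y z) - μ (μ x y) (α z))
    (hl : ∀ x y : V, as x x y = 0) (hr : ∀ x y : V, as y x x = 0) :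
    ∀ x y : V, as x y x = 0 := by
  intro x y
  have expand : as (x + y) (x + y) x = as x x x + as x y x + as y x x + as y y x := by
    simp only [has, map_add, LinearMap.add_apply]
    abel
  rw [hl (x + y) x, hl x x, hl y x, hr x y] at expand
  simpa using expand.symm
end

section
/- In a Hom-alternative algebra, if x and y anticommute (μ(x,y) = -μ(y,x)), then μ(α(x), μ(y,z)) = -μ(α(y), μ(x,z)) and μ(μ(z,x), α(y)) = -μ(μ(z,y), α(x)) for all z. -/
theorem stmt17 {K V : Type*} [Field K] [CharZero K] [AddCommGroup V] [Module K V]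
    (μ : V →ₗ[K] V →ₗ[K] V) (α : V →ₗ[K] V)
    (as : V → V → V → V)
    (has : ∀ x y z : V, as x y z = μ (α x) (μ y z) - μ (μ x y) (α z))
    (hl : ∀ x y : V, as x x y = 0) (hr : ∀ x y : V, as y x x = 0)
    (x y : V) (hanti : μ x y = - μ y x) :
    ∀ z : V, μ (α x) (μ y z) = - μ (α y) (μ x z) ∧
      μ (μ z x) (α y) = - μ (μ z y) (α x) := by
  intro z
  have hsum : μ x y + μ y x = 0 := by rw [hanti]; abel
  constructor
  · have h := hl (x + y) z
    rw [has] at h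
    simp only [map_add, LinearMap.add_apply] at h
    have h1 := hl x z
    have h2 := hl y z
    rw [has] at h1 h2
    have hz : μ (μ x y + μ y x) (α z) = 0 := by rw [hsum]; simp
    simp only [map_add, LinearMap.add_apply] at hz
    linear_combination (norm := abel) h - h1 - h2 + hz
  · have h := hr (x + y) z
    rw [has] at h
    simp only [map_add, LinearMap.add_apply] at h
    have h1 := hr x z
    have h2 := hr y z
    rw [has] at h1 h2
    have hz : μ (α z) (μ x y + μ y x) = 0 := by rw [hsum]; simp
    simp only [map_add] at hz
    linear_combination (norm := abel) h1 + h2 - h + hz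
end

section
/- If (V, μ) is an alternative algebra and α: V → V is an algebra endomorphism, then (V, α ∘ μ, α) is a Hom-alternative algebra. -/
theorem stmt18 {K V : Type*} [Field K] [CharZero K] [AddCommGroup V] [Module K V]
    (μ : V →ₗ[K] V →ₗ[K] V) (α : V →ₗ[K] V)
    (hlalt : ∀ x y : V, μ x (μ x y) = μ (μ x x) y)
    (hralt : ∀ x y : V, μ x (μ y y) = μ (μ x y) y)
    (hend : ∀ x y : V, α (μ x y) = μ (α x) (α y))
    (ν : V → V → V) (hν : ∀ x y, ν x y = α (μ x y)) :
    (∀ x y : V, ν (α x) (ν x y) = ν (ν x x) (α y)) ∧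
    (∀ x y : V, ν (α x) (ν y y) = ν (ν x y) (α y)) := by
  constructor <;> intro x y <;> simp only [hν, hend] <;>
    simp only [hend, hlalt, hralt]
end

section
/- If (V, m, α) is a Hom-associative algebra, then (V, μ, α) with the symmetrized product μ(x,y) := (1/2)(m(x,y) + m(y,x)) is a Hom-Jordan algebra, i.e., μ is commutative and μ(α²(x), μ(y, μ(x,x))) = μ(μ(α(x), y), α(μ(x,x))) for all x, y. -/
theorem stmt19 {K V : Type*} [Field K] [CharZero K] [AddCommGroup V] [Module K V]
    (m : V →ₗ[K] V →ₗ[K] V) (α : V →ₗ[K] V)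
    (hassoc : ∀ x y z : V, m (α x) (m y z) = m (m x y) (α z))
    (μ : V → V → V) (hμ : ∀ x y, μ x y = ((2:K)⁻¹) • (m x y + m y x)) :
    (∀ x y : V, μ x y = μ y x) ∧
    (∀ x y : V, μ (α (α x)) (μ y (μ x x)) = μ (μ (α x) y) (α (μ x x))) := by
  constructor
  · intro x y; rw [hμ, hμ, add_comm]
  · intro x y
    set q := m x x with hq
    have hqq : μ x x = q := by rw [hμ]; simp [smul_add, ← two_smul K, smul_smul]; exact hq.symm
    have e7 : m (α x) q = m q (α x) := hassoc x x x
    simp only [hμ, hqq, map_add, map_smul, LinearMap.smul_apply, LinearMap.add_apply,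
      smul_add, smul_smul]
    have e1 : m (α (α x)) (m y q) = m (m (α x) y) (α q) := hassoc (α x) y q
    have e2 : m (m q y) (α (α x)) = m (α q) (m y (α x)) := (hassoc q y (α x)).symm
    have e3 : m (α (α x)) (m q y) = m (m (α x) q) (α y) := hassoc (α x) q y
    have e4 : m (m y q) (α (α x)) = m (α y) (m (α x) q) := by
      rw [← hassoc y q (α x), ← e7]
    have e5 : m (α q) (m (α x) y) = m (m (α x) q) (α y) := by
      rw [hassoc q (α x) y, ← e7]
    have e6 : m (m y (α x)) (α q) = m (α y) (m (α x) q) := (hassoc y (α x) q).symm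
    rw [e1, e2, e3, e4, e5, e6]
    module
end
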